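/- For every n ≥ 1, let h ⊆ sl(n+1,ℂ) be the image of the embedding gl(n,ℂ) → sl(n+1,ℂ), A ↦ diag(A, −tr A) (block upper-left embedding with compensating lower-right entry). Then there exists a Borel subalgebra b of sl(n+1,ℂ) such that b + h = sl(n+1,ℂ). -/

import Mathlib

/-!
Conjugating the standard Borel subalgebra `b₀` (upper triangular, trace zero) by the transvection
`1 + E_{n,0}` gives a Borel subalgebra `b`. A trace-zero matrix lies in `h` exactly when its last
row and last column vanish off the diagonal, so `b + h = sl(n+1)` says that `b` maps onto these
`2n` coordinates; an explicit preimage in `b₀` exists, the only coupling being between the entries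
`(0,n)` and `(n,0)`, which the diagonal entries `±(C₀ₙ + Cₙ₀)/2` absorb.

Maximality of `b₀`: if a solvable `c ⊇ b₀` contained a matrix with a nonzero entry at `(i,j)`
below the diagonal, bracketing with diagonal matrices would isolate `E_ij ∈ c`; with
`E_ji ∈ b₀` this is an `sl₂`-triple, and an `sl₂`-triple survives every step of the derived
series.
-/

attribute [local instance 100] LieRing.ofAssociativeRing

open LieAlgebra

namespace IsSl2Triple

variable {L : Type*} [LieRing L] {h e f : L}

lemma mem_derivedSeries {R : Type*} [CommRing R] [LieAlgebra R L] [Invertible (2 : R)]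
    (t : IsSl2Triple h e f) (k : ℕ) :
    h ∈ derivedSeries R L k ∧ e ∈ derivedSeries R L k ∧ f ∈ derivedSeries R L k := by
  induction k with
  | zero => simp
  | succ k ih =>
    obtain ⟨hh, he, hf⟩ := ih
    rw [derivedSeries_def, derivedSeriesOfIdeal_succ, ← derivedSeries_def]
    have he' : e = ⅟(2 : R) • ⁅h, e⁆ := by
      rw [t.lie_h_e_smul R, smul_smul, invOf_mul_self, one_smul]
    have hf' : f = -⅟(2 : R) • ⁅h, f⁆ := by
      rw [t.lie_lie_smul_f R, smul_neg, neg_smul, neg_neg, smul_smul, invOf_mul_self, one_smul]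
    refine ⟨t.lie_e_f ▸ LieSubmodule.lie_mem_lie he hf, ?_, ?_⟩
    · rw [he']; exact Submodule.smul_mem _ _ (LieSubmodule.lie_mem_lie hh he)
    · rw [hf']; exact Submodule.smul_mem _ _ (LieSubmodule.lie_mem_lie hh hf)

lemma not_isSolvable (R : Type*) [CommRing R] [LieAlgebra R L] [Invertible (2 : R)]
    (t : IsSl2Triple h e f) : ¬ IsSolvable L := fun _ ↦ by
  obtain ⟨k, hk⟩ := IsSolvable.solvable (R := R) (L := L)
  have hh := (t.mem_derivedSeries (R := R) k).1
  rw [hk, LieSubmodule.mem_bot] at hh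
  exact t.h_ne_zero hh

lemma not_isSolvable_of_mem {R : Type*} [CommRing R] [LieAlgebra R L] [Invertible (2 : R)]
    {c : LieSubalgebra R L} (t : IsSl2Triple h e f) (he : e ∈ c) (hf : f ∈ c) :
    ¬ IsSolvable c :=
  have hh : h ∈ c := t.lie_e_f ▸ c.lie_mem he hf
  not_isSolvable R (h := ⟨h, hh⟩) (e := ⟨e, he⟩) (f := ⟨f, hf⟩)
    { h_ne_zero := fun h0 ↦ t.h_ne_zero (congrArg Subtype.val h0)
      lie_e_f := Subtype.ext t.lie_e_f
      lie_h_e_nsmul := Subtype.ext t.lie_h_e_nsmul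
      lie_h_f_nsmul := Subtype.ext t.lie_h_f_nsmul }

end IsSl2Triple

namespace LieSubalgebra

variable {R L L' : Type*} [CommRing R] [LieRing L] [LieAlgebra R L] [LieRing L']
  [LieAlgebra R L']

lemma map_symm_map (e : L ≃ₗ⁅R⁆ L') (K : LieSubalgebra R L) :
    (K.map (e : L →ₗ⁅R⁆ L')).map (e.symm : L' →ₗ⁅R⁆ L) = K := by
  ext x
  simp

lemma map_le_and_isSolvable (e : L ≃ₗ⁅R⁆ L) {S K : LieSubalgebra R L}
    (hS : ∀ x, e x ∈ S ↔ x ∈ S) (hK : K ≤ S ∧ IsSolvable K) :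
    K.map (e : L →ₗ⁅R⁆ L) ≤ S ∧ IsSolvable (K.map (e : L →ₗ⁅R⁆ L)) := by
  refine ⟨?_, (solvable_iff_equiv_solvable (e.lieSubalgebraMap K)).mp hK.2⟩
  rintro _ ⟨x, hx, rfl⟩
  exact (hS x).mpr (hK.1 hx)

lemma maximal_solvable_map (e : L ≃ₗ⁅R⁆ L) {S b : LieSubalgebra R L}
    (hS : ∀ x, e x ∈ S ↔ x ∈ S) (hb : Maximal (fun c ↦ c ≤ S ∧ IsSolvable c) b) :
    Maximal (fun c ↦ c ≤ S ∧ IsSolvable c) (b.map (e : L →ₗ⁅R⁆ L)) := by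
  have hS_symm (x : L) : e.symm x ∈ S ↔ x ∈ S := by simpa using (hS (e.symm x)).symm
  have map_mono {f : L ≃ₗ⁅R⁆ L} {K K' : LieSubalgebra R L} (h : K ≤ K') :
      K.map (f : L →ₗ⁅R⁆ L) ≤ K'.map (f : L →ₗ⁅R⁆ L) :=
    (gc_map_comap (f := (f : L →ₗ⁅R⁆ L))).monotone_l h
  refine ⟨map_le_and_isSolvable e hS hb.1, fun c hc hbc ↦ ?_⟩
  have hcb := hb.2 (map_le_and_isSolvable e.symm hS_symm hc) (map_symm_map e b ▸ map_mono hbc)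
  calc c = (c.map (e.symm : L →ₗ⁅R⁆ L)).map (e : L →ₗ⁅R⁆ L) :=
        (map_symm_map e.symm c).symm
    _ ≤ b.map (e : L →ₗ⁅R⁆ L) := map_mono hcb

end LieSubalgebra

namespace LieAlgebra.SpecialLinear

lemma mem_sl_iff {R n : Type*} [CommRing R] [DecidableEq n] [Fintype n] {X : Matrix n n R} :
    X ∈ sl n R ↔ X.trace = 0 :=
  Iff.rfl

end LieAlgebra.SpecialLinear

namespace Matrix

open LieAlgebra.SpecialLinear

section single

variable {R : Type*} [CommRing R] {n : Type*} [DecidableEq n] [Fintype n] {i j : n}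

lemma lie_sub_single_single (hij : i ≠ j) :
    ⁅single i i (1 : R) - single j j 1, single i j (1 : R)⁆ = 2 • single i j (1 : R) := by
  simp [Ring.lie_def, sub_mul, mul_sub, hij.symm, ← single_add, one_add_one_eq_two]

lemma isSl2Triple_single [Nontrivial R] (hij : i ≠ j) :
    IsSl2Triple (single i i (1 : R) - single j j 1) (single i j 1) (single j i 1) where
  h_ne_zero h0 := by simpa [hij.symm] using congrFun (congrFun h0 i) i
  lie_e_f := by simp [Ring.lie_def]
  lie_h_e_nsmul := lie_sub_single_single hij
  lie_h_f_nsmul := by rw [← neg_sub, neg_lie, lie_sub_single_single hij.symm]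

lemma lie_single_lie_single (hij : i ≠ j) (X : Matrix n n R) :
    ⁅single i i (1 : R), ⁅single j j (1 : R), X⁆⁆ =
      -(single i j (X i j) + single j i (X j i)) := by
  simp only [Ring.lie_def, mul_sub, sub_mul, ← mul_assoc, ne_eq, hij, not_false_eq_true,
    single_mul_single_of_ne, zero_mul, single_mul_mul_single, one_mul, mul_one, zero_sub]
  simp only [mul_assoc, ne_eq, hij.symm, not_false_eq_true, single_mul_single_of_ne, mul_zero,
    sub_zero]
  abel

end single

section upperTriangular

variable {R : Type*} [CommRing R] {m : ℕ}

def IsUpperBand (k : ℕ) (X : Matrix (Fin m) (Fin m) R) : Prop :=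
  ∀ i j : Fin m, (j : ℕ) < i + k → X i j = 0

lemma isUpperBand_zero_iff {X : Matrix (Fin m) (Fin m) R} :
    IsUpperBand 0 X ↔ X.IsUpperTriangular :=
  ⟨fun h _ _ hji ↦ h _ _ hji, fun h _ _ hji ↦ h hji⟩

lemma IsUpperBand.mul {a b : ℕ} {X Y : Matrix (Fin m) (Fin m) R} (hX : IsUpperBand a X)
    (hY : IsUpperBand b Y) : IsUpperBand (a + b) (X * Y) := by
  intro i j hij
  refine mul_apply.trans (Finset.sum_eq_zero fun l _ ↦ ?_)
  by_cases hl : (l : ℕ) < i + a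
  · rw [hX i l hl, zero_mul]
  · rw [hY l j (by omega), mul_zero]

lemma IsUpperBand.lie {k : ℕ} {X Y : Matrix (Fin m) (Fin m) R} (hX : IsUpperBand 0 X)
    (hY : IsUpperBand k Y) : IsUpperBand k ⁅X, Y⁆ := by
  have hXY := hX.mul hY
  rw [zero_add] at hXY
  intro i j hij
  rw [Ring.lie_def, sub_apply, hXY i j hij, hY.mul hX i j hij, sub_zero]

lemma IsUpperBand.lie_succ {k : ℕ} {X Y : Matrix (Fin m) (Fin m) R} (hX : IsUpperBand k X)
    (hY : IsUpperBand k Y) : IsUpperBand (k + 1) ⁅X, Y⁆ := by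
  intro i j hij
  rw [Ring.lie_def, sub_apply, mul_apply, mul_apply, ← Finset.sum_sub_distrib]
  refine Finset.sum_eq_zero fun l _ ↦ ?_
  by_cases h1 : (l : ℕ) < i + k
  · rw [hX i l h1, hY i l h1]; ring
  by_cases h2 : (j : ℕ) < l + k
  · rw [hX l j h2, hY l j h2]; ring
  obtain rfl : l = i := Fin.ext (by omega)
  obtain rfl : j = l := Fin.ext (by omega)
  ring

variable (R m) in
def upperTriangular : LieSubalgebra R (Matrix (Fin m) (Fin m) R) :=
  lieSubalgebraOfSubalgebra R _ (blockTriangularSubalgebra R R id)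

variable (R m) in
def upperBandIdeal (k : ℕ) : LieIdeal R (upperTriangular R m) where
  carrier := {X | IsUpperBand k (X : Matrix (Fin m) (Fin m) R)}
  add_mem' hX hY i j h := by simp [hX i j h, hY i j h]
  zero_mem' _ _ _ := rfl
  smul_mem' t X hX i j h := by simp [hX i j h]
  lie_mem {X _} hY := (isUpperBand_zero_iff.mpr X.2).lie hY

lemma derivedSeries_le_upperBandIdeal (k : ℕ) :
    derivedSeries R (upperTriangular R m) k ≤ upperBandIdeal R m k := by
  induction k with
  | zero => exact fun X _ ↦ isUpperBand_zero_iff.mpr X.2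
  | succ k ih =>
    rw [derivedSeries_def, derivedSeriesOfIdeal_succ, ← derivedSeries_def]
    refine (LieSubmodule.mono_lie ih ih).trans ?_
    rw [LieSubmodule.lie_le_iff]
    exact fun X hX Y hY ↦ IsUpperBand.lie_succ hX hY

instance : IsSolvable (upperTriangular R m) := by
  refine IsSolvable.mk (R := R) (k := m) (eq_bot_iff.mpr fun X hX ↦ ?_)
  have hband := derivedSeries_le_upperBandIdeal m hX
  rw [LieSubmodule.mem_bot]
  exact Subtype.ext (ext fun i j ↦ hband i j (by omega))

variable (R m) in
def standardBorel : LieSubalgebra R (Matrix (Fin m) (Fin m) R) :=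
  upperTriangular R m ⊓ sl (Fin m) R

lemma mem_standardBorel {X : Matrix (Fin m) (Fin m) R} :
    X ∈ standardBorel R m ↔ X.IsUpperTriangular ∧ X.trace = 0 :=
  Iff.rfl

instance : IsSolvable (standardBorel R m) :=
  (LieSubalgebra.inclusion_injective inf_le_left).lieAlgebra_isSolvable

lemma single_mem_standardBorel {i j : Fin m} (hij : i < j) (r : R) :
    single i j r ∈ standardBorel R m :=
  ⟨blockTriangular_single hij.le r, trace_single_eq_of_ne i j r hij.ne⟩

end upperTriangular

section maximal

variable {K : Type*} [Field K] [CharZero K] {m : ℕ}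
  {c : LieSubalgebra K (Matrix (Fin m) (Fin m) K)}

lemma lie_single_mem (hc : standardBorel K m ≤ c) (a : Fin m) {Z : Matrix (Fin m) (Fin m) K}
    (hZ : Z ∈ c) : ⁅single a a (1 : K), Z⁆ ∈ c := by
  have hm : (m : K) ≠ 0 := Nat.cast_ne_zero.mpr a.pos.ne'
  -- a central scalar correction moves `single a a 1` into `sl` without changing its bracket
  have hD : single a a 1 - (m : K)⁻¹ • 1 ∈ standardBorel K m :=
    mem_standardBorel.mpr ⟨(blockTriangular_single le_rfl 1).sub
      fun i j h ↦ by rw [smul_apply, blockTriangular_one h, smul_zero], by simp [hm]⟩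
  simpa [sub_lie, (Commute.one_left Z).lie_eq] using c.lie_mem (hc hD) hZ

lemma single_mem_of_apply_ne_zero (hc : standardBorel K m ≤ c) {X : Matrix (Fin m) (Fin m) K}
    (hX : X ∈ c) {i j : Fin m} (hji : j < i) (hXij : X i j ≠ 0) : single i j 1 ∈ c := by
  have hpair := lie_single_mem hc i (lie_single_mem hc j hX)
  rw [lie_single_lie_single hji.ne'] at hpair
  have hXij_mem : single i j (X i j) ∈ c := by
    simpa using c.sub_mem (neg_mem hpair) (hc (single_mem_standardBorel hji (X j i)))
  simpa [smul_single, hXij] using c.smul_mem (X i j)⁻¹ hXij_mem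

theorem maximal_standardBorel :
    Maximal (fun c : LieSubalgebra K _ ↦ c ≤ sl (Fin m) K ∧ IsSolvable c)
      (standardBorel K m) := by
  refine ⟨⟨inf_le_right, inferInstance⟩,
    fun c ⟨hc_sl, hc_solv⟩ hle X hX ↦ ⟨fun i j hji ↦ ?_, hc_sl hX⟩⟩
  by_contra hXij
  exact (isSl2Triple_single hji.ne').not_isSolvable_of_mem (R := K)
    (single_mem_of_apply_ne_zero hle hX hji hXij) (hle (single_mem_standardBorel hji 1)) hc_solv

end maximal

section transvectionConj

variable {R : Type*} [CommRing R] {n : Type*} [DecidableEq n] [Fintype n] {i j : n}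

lemma transvection_neg_mul_transvection (hij : i ≠ j) :
    transvection i j (-1 : R) * transvection i j 1 = 1 := by
  rw [transvection_mul_transvection_same _ _ hij, neg_add_cancel, transvection_zero]

noncomputable def transvectionConj (hij : i ≠ j) : Matrix n n R ≃ₗ⁅R⁆ Matrix n n R :=
  lieConj (transvection i j 1)
    (invertibleOfLeftInverse _ _ (transvection_neg_mul_transvection hij))

lemma transvectionConj_apply (hij : i ≠ j) (X : Matrix n n R) :
    transvectionConj hij X = transvection i j 1 * X * transvection i j (-1) := by
  rw [transvectionConj, lieConj_apply, inv_eq_left_inv (transvection_neg_mul_transvection hij)]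

lemma trace_transvectionConj (hij : i ≠ j) (X : Matrix n n R) :
    (transvectionConj hij X).trace = X.trace := by
  rw [transvectionConj_apply, trace_mul_cycle, transvection_neg_mul_transvection hij, one_mul]

end transvectionConj

section lastRowCol

variable {R : Type*} [CommRing R] {n : ℕ}

lemma exists_mem_standardBorel_transvectionConj_eq [Invertible (2 : R)]
    (hlast : Fin.last n ≠ 0) (C : Matrix (Fin (n + 1)) (Fin (n + 1)) R) :
    ∃ L ∈ standardBorel R (n + 1), ∀ i : Fin n,
      transvectionConj hlast L i.castSucc (Fin.last n) = C i.castSucc (Fin.last n) ∧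
      transvectionConj hlast L (Fin.last n) i.castSucc = C (Fin.last n) i.castSucc := by
  have hn : n ≠ 0 := by simpa using hlast
  set t := ⅟(2 : R) * (C (Fin.last n) 0 + C 0 (Fin.last n))
  have ht : t + t = C (Fin.last n) 0 + C 0 (Fin.last n) := by
    rw [← two_mul, ← mul_assoc, mul_invOf_self, one_mul]
  -- Conjugating by the transvection adds row `0` to row `n`, so `C`'s last row goes in row `0`.
  refine ⟨of fun k l ↦ if l = Fin.last n then (if k = Fin.last n then -t else C k (Fin.last n))
    else if k = 0 then (if l = 0 then t else C (Fin.last n) l) else 0,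
    mem_standardBorel.mpr ⟨?_, ?_⟩, fun i ↦ ?_⟩
  · intro k l hlk
    have hl : l ≠ Fin.last n := (hlk.trans_le (Fin.le_last k)).ne
    have hk : k ≠ 0 := ((Fin.zero_le l).trans_lt hlk).ne'
    simp [hl, hk]
  · simp [trace, Finset.sum_ite, Finset.filter_eq', Finset.filter_ne', hn]
  · have hi : i.castSucc ≠ Fin.last n := Fin.castSucc_ne_last i
    rw [transvectionConj_apply]
    refine ⟨by simp [hlast, hi], ?_⟩
    by_cases hi0 : i.castSucc = 0
    · rw [hi0]
      simp only [mul_transvection_apply_same, transvection_mul_apply_same, of_apply,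
        Fin.zero_eq_last_iff, Fin.last_eq_zero_iff, hn, ↓reduceIte, one_mul, zero_add, neg_mul,
        neg_add_rev, neg_neg]
      linear_combination ht
    · simp [hlast, hi, hi0]

lemma exists_block_of_trace_eq_zero {Y : Matrix (Fin (n + 1)) (Fin (n + 1)) R}
    (hY : Y.trace = 0) : ∃ A : Matrix (Fin n) (Fin n) R,
      (∀ i j : Fin n, Y i.castSucc j.castSucc = A i j) ∧
        Y (Fin.last n) (Fin.last n) = -A.trace :=
  ⟨Y.submatrix Fin.castSucc Fin.castSucc, fun _ _ ↦ rfl,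
    eq_neg_of_add_eq_zero_right (by rwa [trace, Fin.sum_univ_castSucc] at hY)⟩

end lastRowCol

end Matrix

open Matrix LieAlgebra.SpecialLinear in
/-- For the image `h` of the embedding `gl(n,ℂ) → sl(n+1,ℂ)`,
`A ↦ diag(A, -tr A)`, there is a Borel subalgebra `b` of `sl(n+1,ℂ)` (a maximal solvable
subalgebra consisting of trace-zero matrices) with `b + h = sl(n+1,ℂ)`. -/
theorem stmt16 (n : ℕ) (hn : 1 ≤ n) :
    ∃ b : LieSubalgebra ℂ (Matrix (Fin (n + 1)) (Fin (n + 1)) ℂ),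
      (∀ X ∈ b, X.trace = 0) ∧
      LieAlgebra.IsSolvable b ∧
      (∀ c : LieSubalgebra ℂ (Matrix (Fin (n + 1)) (Fin (n + 1)) ℂ),
        (∀ X ∈ c, X.trace = 0) → LieAlgebra.IsSolvable c → b ≤ c → c = b) ∧
      ∀ C : Matrix (Fin (n + 1)) (Fin (n + 1)) ℂ, C.trace = 0 →
        ∃ X ∈ b, ∃ Y : Matrix (Fin (n + 1)) (Fin (n + 1)) ℂ,
          ((∃ A : Matrix (Fin n) (Fin n) ℂ,
              (∀ i j : Fin n, Y i.castSucc j.castSucc = A i j) ∧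
              Y (Fin.last n) (Fin.last n) = -A.trace ∧
              (∀ i : Fin n, Y i.castSucc (Fin.last n) = 0 ∧ Y (Fin.last n) i.castSucc = 0))) ∧
          C = X + Y := by
  have hlast : Fin.last n ≠ 0 := Fin.val_ne_zero_iff.mp (by rw [Fin.val_last]; omega)
  set e := transvectionConj (R := ℂ) hlast
  obtain ⟨⟨hb_sl, hb_solv⟩, hb_max⟩ := LieSubalgebra.maximal_solvable_map e (S := sl _ ℂ)
    (fun X ↦ by rw [mem_sl_iff, mem_sl_iff, trace_transvectionConj]) maximal_standardBorel
  refine ⟨(standardBorel ℂ (n + 1)).map (e : _ →ₗ⁅ℂ⁆ _), ?_, hb_solv, ?_, ?_⟩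
  · exact fun X hX ↦ mem_sl_iff.mp (hb_sl hX)
  · intro c hc_sl hc_solv hbc
    have hc : c ≤ sl _ ℂ := fun X hX ↦ mem_sl_iff.mpr (hc_sl X hX)
    exact le_antisymm (hb_max ⟨hc, hc_solv⟩ hbc) hbc
  · intro C hC
    obtain ⟨L, hL, hLC⟩ := exists_mem_standardBorel_transvectionConj_eq hlast C
    obtain ⟨A, hA, hA_trace⟩ := exists_block_of_trace_eq_zero (Y := C - e L)
      (by rw [trace_sub, hC, trace_transvectionConj, (mem_standardBorel.mp hL).2, sub_zero])
    exact ⟨e L, ⟨L, hL, rfl⟩, C - e L, ⟨A, hA, hA_trace,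
      fun i ↦ ⟨sub_eq_zero.mpr (hLC i).1.symm, sub_eq_zero.mpr (hLC i).2.symm⟩⟩,
      (add_sub_cancel _ _).symm⟩
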